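/- arXiv:1603.05693 — 4 statements merged into one kernel-verified Lean document; each statement's English description precedes it below -/
import Mathlib

section
/- For a finite-state Markov chain with state space X = {0,...,m} and transition matrix P, if from every state i the hitting probability of state 0 is 1 (i.e., P_i(U_0 < ∞) = 1 where U_0 = min{n ≥ 1 : J_n = 0}), then the matrix I - P_0 is invertible, where P_0 is obtained from P by setting to zero all entries in the column of state 0 (i.e., (P_0)_{ij} = p_{ij}·1{j ≠ 0}). -/
open MeasureTheory

/-- For a finite-state Markov chain on `X = {0,...,m}` (encoded as `Fin (m+1)`),
if from every state the hitting probability of state `0` (at a time `n ≥ 1`) is one, then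
`I - P₀` is invertible, where `P₀` is the transition matrix with the column of state `0`
set to zero. The Markov chain is given by its family of path measures `μ i` (start in `i`),
characterized by the cylinder-set formula `hcyl`. -/
theorem matrix_one_sub_taboo_invertible {m : ℕ}
    (p : Fin (m + 1) → Fin (m + 1) → ℝ)
    (hp : ∀ i j, 0 ≤ p i j) (hrow : ∀ i, ∑ j, p i j = 1)
    (μ : Fin (m + 1) → Measure (ℕ → Fin (m + 1)))
    (hprob : ∀ i, IsProbabilityMeasure (μ i))
    (hcyl : ∀ (i : Fin (m + 1)) (n : ℕ) (f : ℕ → Fin (m + 1)),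
      (μ i {ω | ∀ k ≤ n, ω k = f k}).toReal =
        if f 0 = i then ∏ k ∈ Finset.range n, p (f k) (f (k + 1)) else 0)
    (hhit : ∀ i, μ i {ω | ∃ n, 1 ≤ n ∧ ω n = 0} = 1) :
    IsUnit ((1 : Matrix (Fin (m + 1)) (Fin (m + 1)) ℝ) -
      Matrix.of (fun i j => if j = 0 then 0 else p i j)).det := by
  rw [isUnit_iff_ne_zero]
  intro hdet
  obtain ⟨v, hv0, hv⟩ := Matrix.exists_mulVec_eq_zero_iff.mpr hdet
  have hQV : ∀ i, v i = ∑ j, (if j = 0 then (0:ℝ) else p i j) * v j := by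
    intro i
    have h := congrFun hv i
    rw [Matrix.sub_mulVec, Matrix.one_mulVec] at h
    have h2 : v i - Matrix.mulVec (Matrix.of fun i j => if j = 0 then (0:ℝ) else p i j) v i = 0 := h
    rw [sub_eq_zero] at h2
    simpa [Matrix.mulVec, dotProduct, Finset.sum_apply, ite_mul] using h2
  obtain ⟨i0, -, hi0⟩ := Finset.exists_max_image Finset.univ (fun i => |v i|) ⟨0, Finset.mem_univ 0⟩
  set M := |v i0| with hM
  have hiM : ∀ j, |v j| ≤ M := fun j => hi0 j (Finset.mem_univ j)
  have hMpos : 0 < M := by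
    obtain ⟨j, hj⟩ := Function.ne_iff.mp hv0
    exact lt_of_lt_of_le (abs_pos.mpr hj) (hiM j)
  have key : ∀ i, |v i| = M → p i 0 = 0 ∧ ∀ j, p i j ≠ 0 → j ≠ 0 → |v j| = M := by
    intro i hi
    set Qr : Fin (m+1) → ℝ := fun j => if j = 0 then 0 else p i j with hQr
    have hQnn : ∀ j, 0 ≤ Qr j := by intro j; by_cases h : j = 0 <;> simp [hQr, h, hp]
    have hs : ∑ j, Qr j = 1 - p i 0 := by
      have h1 : ∑ j, Qr j = ∑ j, (p i j - if j = 0 then p i j else 0) := by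
        apply Finset.sum_congr rfl; intro j _; by_cases h : j = 0 <;> simp [hQr, h]
      rw [h1, Finset.sum_sub_distrib, hrow, Finset.sum_ite_eq' Finset.univ 0,
        if_pos (Finset.mem_univ 0)]
    have hsle : ∑ j, Qr j ≤ 1 := by rw [hs]; linarith [hp i 0]
    have hMA : M ≤ ∑ j, Qr j * |v j| := by
      calc M = |∑ j, Qr j * v j| := by rw [← hi, hQV i]
        _ ≤ ∑ j, |Qr j * v j| := Finset.abs_sum_le_sum_abs _ _
        _ = ∑ j, Qr j * |v j| := by
            apply Finset.sum_congr rfl; intro j _; rw [abs_mul, abs_of_nonneg (hQnn j)]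
    have hAM : ∑ j, Qr j * |v j| ≤ (∑ j, Qr j) * M := by
      rw [Finset.sum_mul]
      exact Finset.sum_le_sum fun j _ => mul_le_mul_of_nonneg_left (hiM j) (hQnn j)
    have hs1 : ∑ j, Qr j = 1 := by nlinarith
    have hp0 : p i 0 = 0 := by rw [hs1] at hs; linarith
    refine ⟨hp0, ?_⟩
    have heach : ∀ j ∈ Finset.univ, Qr j * (M - |v j|) = (0:ℝ) := by
      rw [← Finset.sum_eq_zero_iff_of_nonneg]
      · have h2 : ∑ j, Qr j * (M - |v j|) = (∑ j, Qr j) * M - ∑ j, Qr j * |v j| := by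
          rw [Finset.sum_mul, ← Finset.sum_sub_distrib]
          apply Finset.sum_congr rfl; intro j _; ring
        rw [h2, hs1]; nlinarith
      · intro j _; exact mul_nonneg (hQnn j) (by linarith [hiM j])
    intro j hpj hj0
    have hj := heach j (Finset.mem_univ j)
    have hQj : Qr j = p i j := by simp [hQr, hj0]
    rw [hQj] at hj
    rcases mul_eq_zero.mp hj with h | h
    · exact absurd h hpj
    · linarith [hiM j]
  have step : ∀ (f : ℕ → Fin (m+1)), |v (f 0)| = M → ∀ n,
      (∏ k ∈ Finset.range n, p (f k) (f (k+1))) = 0 ∨ |v (f n)| = M := by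
    intro f hf n
    induction n with
    | zero => exact Or.inr hf
    | succ n ih =>
      rcases ih with h | h
      · left; rw [Finset.prod_range_succ, h, zero_mul]
      · by_cases hz : p (f n) (f (n+1)) = 0
        · left; rw [Finset.prod_range_succ, hz, mul_zero]
        · by_cases h0 : f (n+1) = 0
          · left; rw [Finset.prod_range_succ, h0, (key _ h).1, mul_zero]
          · exact Or.inr ((key _ h).2 _ hz h0)
  have zeroprod : ∀ (f : ℕ → Fin (m+1)) (n : ℕ), f 0 = i0 → f (n+1) = 0 →
      (∏ k ∈ Finset.range (n+1), p (f k) (f (k+1))) = 0 := by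
    intro f n hf h0
    have hfM : |v (f 0)| = M := by rw [hf]
    rcases step f hfM n with h | h
    · rw [Finset.prod_range_succ, h, zero_mul]
    · rw [Finset.prod_range_succ, h0, (key _ h).1, mul_zero]
  -- measure-theoretic part
  have hprob0 := hprob i0
  have hBn : ∀ n : ℕ, μ i0 {ω | ω (n+1) = 0} = 0 := by
    intro n
    set ext : (Fin (n+2) → Fin (m+1)) → ℕ → Fin (m+1) :=
      fun g k => if h : k < n+2 then g ⟨k, h⟩ else 0 with hext
    have hsub : {ω : ℕ → Fin (m+1) | ω (n+1) = 0} ⊆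
        ⋃ g ∈ Finset.univ.filter (fun g : Fin (n+2) → Fin (m+1) => g (Fin.last (n+1)) = 0),
          {ω | ∀ k ≤ n+1, ω k = ext g k} := by
      intro ω hω
      refine Set.mem_iUnion₂.mpr ⟨fun k : Fin (n+2) => ω k, ?_, ?_⟩
      · exact Finset.mem_filter.mpr ⟨Finset.mem_univ _, hω⟩
      · intro k hk
        have hk2 : k < n + 2 := Nat.lt_succ_of_le hk
        simp [hext, hk2]
    have hterm : ∀ g ∈ Finset.univ.filter
        (fun g : Fin (n+2) → Fin (m+1) => g (Fin.last (n+1)) = 0),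
        μ i0 {ω | ∀ k ≤ n+1, ω k = ext g k} = 0 := by
      intro g hg
      have hglast : g (Fin.last (n+1)) = 0 := (Finset.mem_filter.mp hg).2
      have htr := hcyl i0 (n+1) (ext g)
      have hzero : (if ext g 0 = i0 then ∏ k ∈ Finset.range (n+1),
          p (ext g k) (ext g (k+1)) else 0) = 0 := by
        split_ifs with hif
        · apply zeroprod (ext g) n hif
          show (if h : n + 1 < n + 2 then g ⟨n+1, h⟩ else 0) = 0
          rw [dif_pos (by omega)]
          exact hglast
        · rfl
      rw [hzero] at htr
      have hne : μ i0 {ω | ∀ k ≤ n+1, ω k = ext g k} ≠ ⊤ := measure_ne_top _ _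
      rcases (ENNReal.toReal_eq_zero_iff _).mp htr with h | h
      · exact h
      · exact absurd h hne
    refine le_zero_iff.mp ?_
    calc μ i0 {ω | ω (n+1) = 0} ≤ ∑ g ∈ Finset.univ.filter
          (fun g : Fin (n+2) → Fin (m+1) => g (Fin.last (n+1)) = 0),
          μ i0 {ω | ∀ k ≤ n+1, ω k = ext g k} :=
        (measure_mono hsub).trans (measure_biUnion_finset_le _ _)
      _ = 0 := Finset.sum_eq_zero hterm
  have hcover : {ω : ℕ → Fin (m+1) | ∃ n, 1 ≤ n ∧ ω n = 0} ⊆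
      ⋃ n : ℕ, {ω : ℕ → Fin (m+1) | ω (n+1) = 0} := by
    rintro ω ⟨n, hn1, hn0⟩
    refine Set.mem_iUnion.mpr ⟨n - 1, ?_⟩
    have : n - 1 + 1 = n := by omega
    simp only [Set.mem_setOf_eq, this]
    exact hn0
  have hle : μ i0 {ω | ∃ n, 1 ≤ n ∧ ω n = 0} = 0 := by
    have h1 : μ i0 {ω | ∃ n, 1 ≤ n ∧ ω n = 0} ≤ ∑' n : ℕ, μ i0 {ω | ω (n+1) = 0} :=
      (measure_mono hcover).trans (measure_iUnion_le _)
    simpa [hBn] using h1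
  rw [hhit i0] at hle
  exact one_ne_zero hle
end

section
/- Under the same setup, for every integer r ≥ 1 with e_{ij}^{(r)} = E_i[X_1^r 1(J_1 = j)] finite for all i,j, the r-th moments E_i^{(r)} = E_i[W_0^r] satisfy the recurrence E_i^{(r)} = f_i^{(r)} + Σ_{j ≠ 0} p_{ij} E_j^{(r)}, where f_i^{(r)} = e_{i0}^{(r)} + Σ_{j ≠ 0} Σ_{l=0}^{r-1} C(r,l) e_{ij}^{(r-l)} E_j^{(l)}, with E_j^{(0)} = 1. -/
open MeasureTheory ENNReal

/-- Prepend one step to a trajectory of a Markov renewal process. The path `ω` encodes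
`ω n = (J_{n+1}, X_{n+1})`. -/
def consStep {X : Type*} (q : X × ℝ) (ω : ℕ → X × ℝ) : ℕ → X × ℝ
  | 0 => q
  | n + 1 => ω n

/-- Accumulated reward `W₀ = ∑_{n=1}^{U₀} X_n` up to the first hitting time
`U₀ = min{n ≥ 1 : J_n = 0}` (in the path encoding `ω n = (J_{n+1}, X_{n+1})`). -/
noncomputable def hitReward {X : Type*} [Zero X] (ω : ℕ → X × ℝ) : ℝ :=
  ∑ n ∈ Finset.range (sInf {n | (ω n).1 = 0} + 1), (ω n).2

/-- The sojourn moments `e_{ij}^{(l)} = E_i[X₁^l 1(J₁ = j)]`. -/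
noncomputable def sojournMoment {m : ℕ} (Q : Fin (m + 1) → Measure (Fin (m + 1) × ℝ))
    (i j : Fin (m + 1)) (l : ℕ) : ℝ≥0∞ :=
  ∫⁻ q in {q | q.1 = j}, (ENNReal.ofReal q.2) ^ l ∂ Q i

/-!
First-step analysis. Disintegrating the law of the path along its first step `(J₁, X₁) ∼ Q i`,
the remaining path is distributed according to `μ J₁`. If `J₁ = 0` then `W₀ = X₁`; otherwise
`W₀ = X₁ + W₀'` with `W₀'` the reward of the shifted path, and the binomial expansion of
`(X₁ + W₀')^r` integrates to `∑_l C(r,l) e_{iJ₁}^{(r-l)} E_{J₁}^{(l)}`, whose `l = r` term is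
`p_{iJ₁} E_{J₁}^{(r)}`.
-/

section PathSpace

variable {X : Type*} [MeasurableSpace X]

theorem measurable_consStep_uncurry :
    Measurable fun p : (X × ℝ) × (ℕ → X × ℝ) => consStep p.1 p.2 := by
  refine measurable_pi_lambda _ fun n => ?_
  cases n with
  | zero => exact measurable_fst
  | succ n => exact (measurable_pi_apply n).comp measurable_snd

theorem measurable_consStep (q : X × ℝ) : Measurable (consStep q) :=
  measurable_consStep_uncurry.comp measurable_prodMk_left

theorem measurable_sInf_setOf_mem {α : Type*} [MeasurableSpace α] {A : ℕ → Set α}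
    (hA : ∀ n, MeasurableSet (A n)) : Measurable fun a => sInf {n | a ∈ A n} := by
  refine measurable_of_Iic fun k => ?_
  have hpre : (fun a => sInf {n | a ∈ A n}) ⁻¹' Set.Iic k = (⋃ n ≤ k, A n) ∪ ⋂ n, (A n)ᶜ := by
    ext a
    simp only [Set.mem_preimage, Set.mem_Iic, Set.mem_union, Set.mem_iUnion, Set.mem_iInter,
      Set.mem_compl_iff, exists_prop]
    constructor
    · intro h
      by_cases hne : ∃ n, a ∈ A n
      · exact Or.inl ⟨_, h, Nat.sInf_mem hne⟩
      · exact Or.inr fun n hn => hne ⟨n, hn⟩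
    · rintro (⟨n, hnk, hn⟩ | hnone)
      · exact (Nat.sInf_le hn).trans hnk
      · simp [hnone]
  rw [hpre]
  exact (MeasurableSet.biUnion (Set.to_countable _) fun n _ => hA n).union
    (.iInter fun n => (hA n).compl)

theorem measurableSet_fst_apply_eq [MeasurableSingletonClass X] (n : ℕ) (x : X) :
    MeasurableSet {ω : ℕ → X × ℝ | (ω n).1 = x} :=
  measurable_fst.comp (measurable_pi_apply n) (measurableSet_singleton x)

theorem measurable_exists_fst_apply_eq [MeasurableSingletonClass X] (x : X) :
    Measurable fun ω : ℕ → X × ℝ => ∃ n, (ω n).1 = x :=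
  .exists fun n => measurableSet_setOfPred.mp (measurableSet_fst_apply_eq n x)

theorem measurable_hitReward [Zero X] [MeasurableSingletonClass X] :
    Measurable (hitReward : (ℕ → X × ℝ) → ℝ) := by
  have hτ : Measurable fun ω : ℕ → X × ℝ => sInf {n | (ω n).1 = 0} :=
    measurable_sInf_setOf_mem fun n => measurableSet_fst_apply_eq n 0
  have hsum : Measurable fun p : ℕ × (ℕ → X × ℝ) => ∑ n ∈ Finset.range (p.1 + 1), (p.2 n).2 :=
    measurable_from_prod_countable_right fun k =>
      Finset.measurable_sum (Finset.range (k + 1)) fun n _ =>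
        measurable_snd.comp (measurable_pi_apply n)
  exact hsum.comp (hτ.prodMk measurable_id)

end PathSpace

section HitReward

variable {X : Type*} [Zero X]

theorem hitReward_nonneg {ω : ℕ → X × ℝ} (h : ∀ n, 0 ≤ (ω n).2) : 0 ≤ hitReward ω :=
  Finset.sum_nonneg fun n _ => h n

theorem hitReward_consStep_of_fst_eq_zero {q : X × ℝ} (hq : q.1 = 0) (ω : ℕ → X × ℝ) :
    hitReward (consStep q ω) = q.2 := by
  have hτ : sInf {n | (consStep q ω n).1 = 0} = 0 := Nat.sInf_eq_zero.mpr (Or.inl hq)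
  rw [hitReward, hτ, zero_add, Finset.sum_range_one]
  rfl

theorem hitReward_consStep_of_fst_ne_zero {q : X × ℝ} (hq : q.1 ≠ 0) {ω : ℕ → X × ℝ}
    (hω : ∃ n, (ω n).1 = 0) :
    hitReward (consStep q ω) = q.2 + hitReward ω := by
  have hpos : 1 ≤ sInf {n | (consStep q ω n).1 = 0} := by
    refine Nat.one_le_iff_ne_zero.mpr fun h0 => ?_
    rcases Nat.sInf_eq_zero.mp h0 with h | h
    · exact hq h
    · obtain ⟨n, hn⟩ := hω
      exact h.subset (show n + 1 ∈ {n | (consStep q ω n).1 = 0} from hn)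
  have hτ : sInf {n | (ω n).1 = 0} + 1 = sInf {n | (consStep q ω n).1 = 0} := Nat.sInf_add hpos
  rw [hitReward, ← hτ, Finset.sum_range_succ', add_comm]
  rfl

end HitReward

/-- `μ i` is the law of the path `(J_{n+1}, X_{n+1})_n` started from `J₀ = i`: its first step is
drawn from `Q i`, and the rest of the path from `μ J₁`. -/
def IsMarkovRenewal {S : Type*} [MeasurableSpace S] (Q : S → Measure (S × ℝ))
    (μ : S → Measure (ℕ → S × ℝ)) : Prop :=
  ∀ i A, MeasurableSet A → μ i A = ∫⁻ q, μ q.1 {ω | consStep q ω ∈ A} ∂Q i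

section MarkovRenewal

variable {S : Type*} [MeasurableSpace S] {Q : S → Measure (S × ℝ)} {μ : S → Measure (ℕ → S × ℝ)}

theorem measurable_map_consStep [Countable S] [MeasurableSingletonClass S]
    [∀ i, SFinite (μ i)] : Measurable fun q : S × ℝ => (μ q.1).map (consStep q) := by
  refine Measure.measurable_of_measurable_coe _ fun s hs => ?_
  have hslice : Measurable fun p : (S × ℝ) × S =>
      μ p.2 (Prod.mk p.1 ⁻¹' ((fun p => consStep p.1 p.2) ⁻¹' s)) :=
    measurable_from_prod_countable_left fun j =>
      measurable_measure_prodMk_left (ν := μ j) (measurable_consStep_uncurry hs)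
  simp_rw [Measure.map_apply (measurable_consStep _) hs]
  exact hslice.comp (measurable_id.prodMk measurable_fst)

theorem IsMarkovRenewal.lintegral_eq [Countable S] [MeasurableSingletonClass S]
    [∀ i, SFinite (μ i)] (h : IsMarkovRenewal Q μ) (i : S)
    {f : (ℕ → S × ℝ) → ℝ≥0∞} (hf : Measurable f) :
    ∫⁻ ω, f ω ∂μ i = ∫⁻ q, ∫⁻ ω, f (consStep q ω) ∂μ q.1 ∂Q i := by
  have hbind : μ i = (Q i).bind fun q => (μ q.1).map (consStep q) := by
    ext A hA
    rw [Measure.bind_apply hA measurable_map_consStep.aemeasurable, h i A hA]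
    simp_rw [Measure.map_apply (measurable_consStep _) hA]
    rfl
  rw [hbind, Measure.lintegral_bind measurable_map_consStep.aemeasurable hf.aemeasurable]
  simp_rw [lintegral_map hf (measurable_consStep _)]

theorem IsMarkovRenewal.ae_nonneg (h : IsMarkovRenewal Q μ)
    (hQ : ∀ i, ∀ᵐ q ∂Q i, 0 ≤ q.2) (i : S) : ∀ᵐ ω ∂μ i, ∀ n, 0 ≤ (ω n).2 := by
  suffices hneg : ∀ n i, μ i {ω | (ω n).2 < 0} = 0 by
    refine ae_all_iff.mpr fun n => ae_iff.mpr ?_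
    simpa only [not_le] using hneg n i
  have hmeas (n : ℕ) : MeasurableSet {ω : ℕ → S × ℝ | (ω n).2 < 0} :=
    measurableSet_lt (measurable_snd.comp (measurable_pi_apply n)) measurable_const
  intro n
  induction n with
  | zero =>
    intro i
    rw [h i _ (hmeas 0)]
    refine (lintegral_congr_ae ((hQ i).mono fun q hq => ?_)).trans lintegral_zero
    simp [consStep, not_lt.mpr hq]
  | succ n ih =>
    intro i
    rw [h i _ (hmeas (n + 1))]
    exact (lintegral_congr fun q : S × ℝ => ih q.1).trans lintegral_zero

end MarkovRenewal

section RewardMoments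

variable {X : Type*} [MeasurableSpace X] [Zero X] {ν : Measure (ℕ → X × ℝ)}

theorem lintegral_hitReward_consStep_pow_of_fst_eq_zero [IsProbabilityMeasure ν] {q : X × ℝ}
    (hq : q.1 = 0) (r : ℕ) :
    ∫⁻ ω, ENNReal.ofReal (hitReward (consStep q ω)) ^ r ∂ν = ENNReal.ofReal q.2 ^ r := by
  simp [hitReward_consStep_of_fst_eq_zero hq]

theorem lintegral_hitReward_consStep_pow_of_fst_ne_zero [MeasurableSingletonClass X]
    (hν_nonneg : ∀ᵐ ω ∂ν, ∀ n, 0 ≤ (ω n).2) (hν_hit : ∀ᵐ ω ∂ν, ∃ n, (ω n).1 = 0)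
    {q : X × ℝ} (hq : q.1 ≠ 0) (hq₂ : 0 ≤ q.2) (r : ℕ) :
    ∫⁻ ω, ENNReal.ofReal (hitReward (consStep q ω)) ^ r ∂ν =
      ∑ l ∈ Finset.range (r + 1), (r.choose l : ℝ≥0∞) * ENNReal.ofReal q.2 ^ (r - l) *
        ∫⁻ ω, ENNReal.ofReal (hitReward ω) ^ l ∂ν := by
  have hmeas (l : ℕ) : Measurable fun ω : ℕ → X × ℝ => ENNReal.ofReal (hitReward ω) ^ l :=
    measurable_hitReward.ennreal_ofReal.pow_const l
  calc ∫⁻ ω, ENNReal.ofReal (hitReward (consStep q ω)) ^ r ∂ν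
      = ∫⁻ ω, ∑ l ∈ Finset.range (r + 1), (r.choose l : ℝ≥0∞) * ENNReal.ofReal q.2 ^ (r - l) *
          ENNReal.ofReal (hitReward ω) ^ l ∂ν := by
        refine lintegral_congr_ae ?_
        filter_upwards [hν_nonneg, hν_hit] with ω hω_nonneg hω_hit
        rw [hitReward_consStep_of_fst_ne_zero hq hω_hit,
          ENNReal.ofReal_add hq₂ (hitReward_nonneg hω_nonneg), add_comm, add_pow]
        exact Finset.sum_congr rfl fun l _ => by ring
    _ = _ := by
        rw [lintegral_finsetSum _ fun l _ => (hmeas l).const_mul _]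
        simp_rw [lintegral_const_mul _ (hmeas _)]

end RewardMoments

theorem lintegral_eq_sum_setLIntegral_fst {S Y : Type*} [MeasurableSpace S]
    [MeasurableSingletonClass S] [Fintype S] [MeasurableSpace Y] (ν : Measure (S × Y))
    (f : S × Y → ℝ≥0∞) : ∫⁻ q, f q ∂ν = ∑ j, ∫⁻ q in {q | q.1 = j}, f q ∂ν := by
  have hcover : (⋃ j, {q : S × Y | q.1 = j}) = Set.univ :=
    Set.iUnion_eq_univ_iff.mpr fun q => ⟨q.1, rfl⟩
  rw [← setLIntegral_univ, ← hcover, lintegral_iUnion, tsum_fintype]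
  · exact fun j => measurable_fst (measurableSet_singleton j)
  · exact fun j k hjk => Set.disjoint_left.mpr fun q hj hk => hjk (hj.symm.trans hk)

section SojournMoments

variable {m : ℕ} {Q : Fin (m + 1) → Measure (Fin (m + 1) × ℝ)}
  {μ : Fin (m + 1) → Measure (ℕ → Fin (m + 1) × ℝ)}

theorem sojournMoment_zero (i j : Fin (m + 1)) : sojournMoment Q i j 0 = Q i {q | q.1 = j} := by
  simp [sojournMoment]

theorem setLIntegral_fst_eq_sum_sojournMoment (i j : Fin (m + 1)) (r : ℕ) (c : ℕ → ℝ≥0∞) :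
    ∫⁻ q in {q | q.1 = j}, ∑ l ∈ Finset.range (r + 1), (r.choose l : ℝ≥0∞) *
        ENNReal.ofReal q.2 ^ (r - l) * c l ∂Q i =
      ∑ l ∈ Finset.range (r + 1), (r.choose l : ℝ≥0∞) * sojournMoment Q i j (r - l) * c l := by
  rw [lintegral_finsetSum _ fun l _ => by fun_prop]
  refine Finset.sum_congr rfl fun l _ => ?_
  rw [lintegral_mul_const _ (by fun_prop), lintegral_const_mul _ (by fun_prop), sojournMoment]

theorem setLIntegral_hitReward_consStep_pow_of_eq_zero [∀ j, IsProbabilityMeasure (μ j)]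
    (i : Fin (m + 1)) (r : ℕ) :
    ∫⁻ q in {q | q.1 = 0}, ∫⁻ ω, ENNReal.ofReal (hitReward (consStep q ω)) ^ r ∂μ q.1 ∂Q i =
      sojournMoment Q i 0 r :=
  setLIntegral_congr_fun (measurable_fst (measurableSet_singleton 0)) fun _ hq =>
    lintegral_hitReward_consStep_pow_of_fst_eq_zero hq r

theorem setLIntegral_hitReward_consStep_pow_of_ne_zero {i j : Fin (m + 1)}
    (hQ : ∀ᵐ q ∂Q i, 0 ≤ q.2) (hμ_nonneg : ∀ᵐ ω ∂μ j, ∀ n, 0 ≤ (ω n).2)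
    (hμ_hit : ∀ᵐ ω ∂μ j, ∃ n, (ω n).1 = 0) (hj : j ≠ 0) (r : ℕ) :
    ∫⁻ q in {q | q.1 = j}, ∫⁻ ω, ENNReal.ofReal (hitReward (consStep q ω)) ^ r ∂μ q.1 ∂Q i =
      ∑ l ∈ Finset.range r, (r.choose l : ℝ≥0∞) * sojournMoment Q i j (r - l) *
          ∫⁻ ω, ENNReal.ofReal (hitReward ω) ^ l ∂μ j +
        Q i {q | q.1 = j} * ∫⁻ ω, ENNReal.ofReal (hitReward ω) ^ r ∂μ j := by
  calc _ = ∫⁻ q in {q | q.1 = j}, ∑ l ∈ Finset.range (r + 1), (r.choose l : ℝ≥0∞) *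
        ENNReal.ofReal q.2 ^ (r - l) * ∫⁻ ω, ENNReal.ofReal (hitReward ω) ^ l ∂μ j ∂Q i := by
        refine setLIntegral_congr_fun_ae (measurable_fst (measurableSet_singleton j))
          (hQ.mono fun q hq₂ hqj => ?_)
        rw [← hqj]
        exact lintegral_hitReward_consStep_pow_of_fst_ne_zero (hqj ▸ hμ_nonneg) (hqj ▸ hμ_hit)
          (hqj ▸ hj) hq₂ r
    _ = _ := by
        rw [setLIntegral_fst_eq_sum_sojournMoment, Finset.sum_range_succ, Nat.sub_self,
          sojournMoment_zero, Nat.choose_self, Nat.cast_one, one_mul]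

end SojournMoments

theorem rth_moment_hitting_reward_system_general {m : ℕ}
    (Q : Fin (m + 1) → Measure (Fin (m + 1) × ℝ))
    (hQpos : ∀ i, Q i {q | q.2 < 0} = 0)
    (μ : Fin (m + 1) → Measure (ℕ → Fin (m + 1) × ℝ))
    (hprob : ∀ i, IsProbabilityMeasure (μ i))
    (hMRP : ∀ (i : Fin (m + 1)) (A : Set (ℕ → Fin (m + 1) × ℝ)), MeasurableSet A →
      μ i A = ∫⁻ q, μ q.1 {ω | consStep q ω ∈ A} ∂ Q i)
    (hhit : ∀ i, μ i {ω | ∃ n, (ω n).1 = 0} = 1)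
    (r : ℕ) :
    ∀ i, ∫⁻ ω, ENNReal.ofReal (hitReward ω) ^ r ∂ μ i =
      (sojournMoment Q i 0 r +
        ∑ j ∈ Finset.univ.erase 0, ∑ l ∈ Finset.range r,
          (r.choose l : ℝ≥0∞) * sojournMoment Q i j (r - l) *
            ∫⁻ ω, ENNReal.ofReal (hitReward ω) ^ l ∂ μ j) +
      ∑ j ∈ Finset.univ.erase 0,
        Q i {q | q.1 = j} * ∫⁻ ω, ENNReal.ofReal (hitReward ω) ^ r ∂ μ j := by
  intro i
  have hMR : IsMarkovRenewal Q μ := hMRP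
  have hQ_nonneg (j : Fin (m + 1)) : ∀ᵐ q ∂Q j, 0 ≤ q.2 :=
    ae_iff.mpr (by simpa only [not_le] using hQpos j)
  have hμ_hit (j : Fin (m + 1)) : ∀ᵐ ω ∂μ j, ∃ n, (ω n).1 = 0 :=
    (ae_iff_prob_eq_one (measurable_exists_fst_apply_eq 0)).mpr (hhit j)
  rw [hMR.lintegral_eq i (measurable_hitReward.ennreal_ofReal.pow_const r),
    lintegral_eq_sum_setLIntegral_fst, ← Finset.add_sum_erase _ _ (Finset.mem_univ 0),
    setLIntegral_hitReward_consStep_pow_of_eq_zero,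
    Finset.sum_congr rfl fun j hj => setLIntegral_hitReward_consStep_pow_of_ne_zero (hQ_nonneg i)
      (hMR.ae_nonneg hQ_nonneg j) (hμ_hit j) (Finset.ne_of_mem_erase hj) r,
    Finset.sum_add_distrib, add_assoc]

/-- For every `r ≥ 1` with all moments `e_{ij}^{(l)}`, `l ≤ r`, finite, the
`r`-th moments `E_i^{(r)} = E_i[W₀^r]` of the accumulated reward satisfy
`E_i^{(r)} = f_i^{(r)} + ∑_{j ≠ 0} p_{ij} E_j^{(r)}` where
`f_i^{(r)} = e_{i0}^{(r)} + ∑_{j ≠ 0} ∑_{l=0}^{r-1} C(r,l) e_{ij}^{(r-l)} E_j^{(l)}`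
and `E_j^{(0)} = 1`. -/
theorem rth_moment_hitting_reward_system {m : ℕ}
    (Q : Fin (m + 1) → Measure (Fin (m + 1) × ℝ))
    (hQ : ∀ i, IsProbabilityMeasure (Q i))
    (hQpos : ∀ i, Q i {q | q.2 < 0} = 0)
    (μ : Fin (m + 1) → Measure (ℕ → Fin (m + 1) × ℝ))
    (hprob : ∀ i, IsProbabilityMeasure (μ i))
    (hMRP : ∀ (i : Fin (m + 1)) (A : Set (ℕ → Fin (m + 1) × ℝ)), MeasurableSet A →
      μ i A = ∫⁻ q, μ q.1 {ω | consStep q ω ∈ A} ∂ Q i)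
    (hhit : ∀ i, μ i {ω | ∃ n, (ω n).1 = 0} = 1)
    (r : ℕ) (hr : 1 ≤ r)
    (hfin : ∀ i j, ∀ l ≤ r, sojournMoment Q i j l ≠ ⊤) :
    ∀ i, ∫⁻ ω, ENNReal.ofReal (hitReward ω) ^ r ∂ μ i =
      (sojournMoment Q i 0 r +
        ∑ j ∈ Finset.univ.erase 0, ∑ l ∈ Finset.range r,
          (r.choose l : ℝ≥0∞) * sojournMoment Q i j (r - l) *
            ∫⁻ ω, ENNReal.ofReal (hitReward ω) ^ l ∂ μ j) +
      ∑ j ∈ Finset.univ.erase 0,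
        Q i {q | q.1 = j} * ∫⁻ ω, ENNReal.ofReal (hitReward ω) ^ r ∂ μ j :=
  rth_moment_hitting_reward_system_general Q hQpos μ hprob hMRP hhit r
end

section
/- Let (J_n, X_n) be a Markov renewal process on finite state space X, let k ≠ 0 be a state with p_{kk} < 1, and let _kJ(t) be the reduced semi-Markov process obtained by excluding state k (observing the original process only at visits to X \ {k} and accumulating the intermediate sojourn times). Then the first hitting time to state 0 is invariant: W_0 = _kW_0 almost surely, where W_0 = Σ_{n=1}^{U_0} X_n and _kW_0 = Σ_{n=1}^{_kU_0} _kX_n. In particular E_i[W_0^r] = E_i[_kW_0^r] for all r and all initial states i. -/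
open MeasureTheory ENNReal

/-- Successive times `ₖV_n` of visits of the embedded chain to the reduced space
`X \ {k}`: `ₖV_0 = 0`, `ₖV_{n+1} = min{r > ₖV_n : J_r ≠ k}`. -/
noncomputable def renV {X : Type*} (k : X) (ω : ℕ → X × ℝ) : ℕ → ℕ
  | 0 => 0
  | n + 1 => sInf {r | renV k ω n < r ∧ (ω (r - 1)).1 ≠ k}

/-- First hitting time `ₖU₀ = min{n ≥ 1 : ₖJ_n = 0}` of state `0` for the reduced
embedded chain `ₖJ_n = J_{ₖV_n}`. -/
noncomputable def redHitIndex {X : Type*} [Zero X] (k : X) (ω : ℕ → X × ℝ) : ℕ :=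
  sInf {n | 1 ≤ n ∧ (ω (renV k ω n - 1)).1 = 0}

/-- Accumulated reward `ₖW₀ = ∑_{n=1}^{ₖU₀} ₖX_n = ∑_{r=1}^{ₖV_{ₖU₀}} X_r` of the
reduced semi-Markov process up to its first hitting of state `0`. -/
noncomputable def redHitReward {X : Type*} [Zero X] (k : X) (ω : ℕ → X × ℝ) : ℝ :=
  ∑ s ∈ Finset.range (renV k ω (redHitIndex k ω)), (ω s).2

lemma key_reward_eq {m : ℕ} (k : Fin (m + 1)) (hk : k ≠ 0) (ω : ℕ → Fin (m + 1) × ℝ)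
    (h : ∃ n, (ω n).1 = 0) : hitReward ω = redHitReward k ω := by
  classical
  set U := sInf {n | (ω n).1 = 0} with hU
  have hUmem : (ω U).1 = 0 := Nat.sInf_mem h
  have hUmin : ∀ n, n < U → (ω n).1 ≠ 0 := fun n hn => Nat.notMem_of_lt_sInf hn
  set N := U + 1 with hN
  set V := renV k ω with hV
  have hV0 : V 0 = 0 := rfl
  have hωN : (ω (N - 1)).1 = 0 := by simpa [hN] using hUmem
  have hstep : ∀ n, V n < N → V n < V (n + 1) ∧ V (n + 1) ≤ N := by
    intro n hn
    have hNmem : N ∈ {r | V n < r ∧ (ω (r - 1)).1 ≠ k} := by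
      refine ⟨hn, ?_⟩
      rw [hωN]; exact fun hc => hk hc.symm
    have hmem := Nat.sInf_mem ⟨N, hNmem⟩
    have hdef : V (n + 1) = sInf {r | V n < r ∧ (ω (r - 1)).1 ≠ k} := rfl
    rw [hdef]
    exact ⟨hmem.1, Nat.sInf_le hNmem⟩
  have hex : ∃ n, V n = N := by
    by_contra hc
    push_neg at hc
    have hind : ∀ n, n ≤ V n ∧ V n < N := by
      intro n
      induction n with
      | zero => exact ⟨Nat.zero_le _, by omega⟩
      | succ n ih =>
        obtain ⟨h1, h2⟩ := ih
        obtain ⟨h3, h4⟩ := hstep n h2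
        exact ⟨by omega, lt_of_le_of_ne h4 (hc _)⟩
    have := hind N
    omega
  set M := sInf {n | V n = N} with hM
  have hVM : V M = N := Nat.sInf_mem hex
  have hMmin : ∀ n, n < M → V n ≠ N := by
    intro n hn
    rw [hM] at hn
    have h2 := Nat.notMem_of_lt_sInf hn
    exact h2
  have hM1 : 1 ≤ M := by
    rcases Nat.eq_zero_or_pos M with h0 | h1
    · rw [h0] at hVM; omega
    · exact h1
  have hbound : ∀ n, n ≤ M → n ≤ V n ∧ V n ≤ N := by
    intro n hn
    induction n with
    | zero => exact ⟨Nat.zero_le _, by omega⟩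
    | succ n ih =>
      obtain ⟨h1, h2⟩ := ih (by omega)
      have h2' : V n < N := lt_of_le_of_ne h2 (hMmin n (by omega))
      obtain ⟨h3, h4⟩ := hstep n h2'
      exact ⟨by omega, h4⟩
  have hMT : M ∈ {n | 1 ≤ n ∧ (ω (V n - 1)).1 = 0} := ⟨hM1, by rw [hVM]; exact hωN⟩
  have hidx : redHitIndex k ω = M := by
    have hdef : redHitIndex k ω = sInf {n | 1 ≤ n ∧ (ω (V n - 1)).1 = 0} := rfl
    rw [hdef]
    refine le_antisymm (Nat.sInf_le hMT) ?_
    by_contra hlt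
    push_neg at hlt
    have hjmem := Nat.sInf_mem (⟨M, hMT⟩ : {n | 1 ≤ n ∧ (ω (V n - 1)).1 = 0}.Nonempty)
    set j := sInf {n | 1 ≤ n ∧ (ω (V n - 1)).1 = 0} with hj
    obtain ⟨hj1, hj0⟩ := hjmem
    obtain ⟨hb1, hb2⟩ := hbound j (le_of_lt hlt)
    have hb2' : V j < N := lt_of_le_of_ne hb2 (hMmin j hlt)
    exact hUmin (V j - 1) (by omega) hj0
  show (∑ n ∈ Finset.range (U + 1), (ω n).2) = redHitReward k ω
  rw [redHitReward, ← hV, hidx, hVM]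

/-- Excluding a state `k ≠ 0` with `p_{kk} < 1` from the phase space leaves the
first hitting time to `0` invariant: `W₀ = ₖW₀` almost surely, and hence
`E_i[W₀^r] = E_i[ₖW₀^r]` for all `r` and all initial states `i`. -/
theorem reduced_hitting_reward_invariance {m : ℕ}
    (Q : Fin (m + 1) → Measure (Fin (m + 1) × ℝ))
    (hQ : ∀ i, IsProbabilityMeasure (Q i))
    (hQpos : ∀ i, Q i {q | q.2 < 0} = 0)
    (μ : Fin (m + 1) → Measure (ℕ → Fin (m + 1) × ℝ))
    (hprob : ∀ i, IsProbabilityMeasure (μ i))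
    (hMRP : ∀ (i : Fin (m + 1)) (A : Set (ℕ → Fin (m + 1) × ℝ)), MeasurableSet A →
      μ i A = ∫⁻ q, μ q.1 {ω | consStep q ω ∈ A} ∂ Q i)
    (hhit : ∀ i, μ i {ω | ∃ n, (ω n).1 = 0} = 1)
    (k : Fin (m + 1)) (hk : k ≠ 0)
    (hpkk : Q k {q | q.1 = k} < 1) :
    (∀ i, μ i {ω | hitReward ω = redHitReward k ω} = 1) ∧
    (∀ (r : ℕ) (i : Fin (m + 1)),
      ∫⁻ ω, ENNReal.ofReal (hitReward ω) ^ r ∂ μ i =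
        ∫⁻ ω, ENNReal.ofReal (redHitReward k ω) ^ r ∂ μ i) := by
  have hmeas : MeasurableSet {ω : ℕ → Fin (m + 1) × ℝ | ∃ n, (ω n).1 = 0} := by
    have : {ω : ℕ → Fin (m + 1) × ℝ | ∃ n, (ω n).1 = 0} =
        ⋃ n, (fun ω : ℕ → Fin (m + 1) × ℝ => (ω n).1) ⁻¹' {0} := by
      ext ω; simp
    rw [this]
    exact MeasurableSet.iUnion fun n =>
      (measurable_fst.comp (measurable_pi_apply n)) (measurableSet_singleton 0)
  have hnull : ∀ i, μ i {ω | ¬ hitReward ω = redHitReward k ω} = 0 := by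
    intro i
    haveI := hprob i
    have hc : μ i ({ω : ℕ → Fin (m + 1) × ℝ | ∃ n, (ω n).1 = 0}ᶜ) = 0 := by
      rw [measure_compl hmeas (measure_ne_top _ _), hhit i, measure_univ, tsub_self]
    exact measure_mono_null (fun ω hω hA => hω (key_reward_eq k hk ω hA)) hc
  constructor
  · intro i
    haveI := hprob i
    refine le_antisymm prob_le_one ?_
    rw [← hhit i]
    exact measure_mono fun ω hω => key_reward_eq k hk ω hω
  · intro r i
    have hae : ∀ᵐ ω ∂ μ i, hitReward ω = redHitReward k ω := by
      rw [ae_iff]; exact hnull i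
    exact lintegral_congr_ae (hae.mono fun ω hω => by simp only []; rw [hω])
end

section
/- If (J_n, X_n) satisfies: (A) X is a communicating class for J_n, (B) no instantaneous transitions (Q_{ij}(0) = 0 for all i,j), and (C_d) e_{ij}^{(d)} < ∞ for all i,j, then for any state k ≠ 0 the reduced Markov renewal process (_kJ_n, _kX_n) on X \ {k} also satisfies (A), (B), and (C_d). -/
/-
Let `T = ₖV₁` be the first exit time of the embedded chain from `k` and `p = Q_kk(∞)`. As `k`
communicates with `0 ≠ k`, `p < 1`; by the Markov property the chain stays at `k` for `n` steps
with probability at most `p ^ (n - 1)`, so `T < ∞` almost surely, which together with `X_s > 0`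
almost surely gives (B). On `{T = n + 1}` the reduced sojourn is `X₁ + ⋯ + X_{n+1}`, so
`(ₖX₁)^d ≤ (n + 1)^d ∑ X_s^d`; the Markov property bounds each `E[X_s^d; J₁ = ⋯ = Jₙ = k]` by
`C p ^ (n - 2)`, where `C` bounds the `d`-th moments of all `Q_i`, and `∑ (n + 1)^(d+1) p ^ (n - 2)`
converges. (A) holds because every visit of `J` to `X \ {k}` is a visit of the reduced chain.
-/

open MeasureTheory ENNReal

/-- The reduced embedded chain `ₖJ_n = J_{ₖV_n}` (for `n ≥ 1`). -/
noncomputable def redChain {X : Type*} (k : X) (ω : ℕ → X × ℝ) (n : ℕ) : X :=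
  (ω (renV k ω n - 1)).1

/-- The reduced sojourn times `ₖX_n = ∑_{r = ₖV_{n-1}+1}^{ₖV_n} X_r`. -/
noncomputable def redSojournSeq {X : Type*} (k : X) (ω : ℕ → X × ℝ) (n : ℕ) : ℝ :=
  ∑ s ∈ Finset.Ico (renV k ω (n - 1)) (renV k ω n), (ω s).2

open ProbabilityTheory

theorem summable_add_pow_mul_geometric {r : ℝ} (hr : ‖r‖ < 1) (a : ℝ) (D : ℕ) :
    Summable fun n : ℕ => ((n : ℝ) + a) ^ D * r ^ n := by
  simp_rw [add_pow, Finset.sum_mul]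
  refine summable_sum fun j _ => ?_
  exact ((summable_pow_mul_geometric_of_norm_lt_one j hr).mul_right
    (a ^ (D - j) * D.choose j)).congr fun n => by ring

theorem ENNReal.tsum_natCast_pow_mul_pow_sub_ne_top {p : ℝ≥0∞} (hp : p < 1) (D a : ℕ) :
    ∑' n : ℕ, (n : ℝ≥0∞) ^ D * p ^ (n - a) ≠ ⊤ := by
  lift p to NNReal using hp.ne_top
  have hsum : Summable fun n : ℕ => (n : NNReal) ^ D * p ^ (n - a) := by
    rw [← NNReal.summable_coe, ← summable_nat_add_iff a]
    have hr : ‖(p : ℝ)‖ < 1 := by simpa using hp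
    simpa using summable_add_pow_mul_geometric hr a D
  exact_mod_cast ENNReal.tsum_coe_ne_top_iff_summable.2 hsum

theorem ENNReal.sum_pow_le_card_pow_mul_sum_pow {ι : Type*} {s : Finset ι} (hs : s.Nonempty)
    (f : ι → ℝ≥0∞) (d : ℕ) :
    (∑ i ∈ s, f i) ^ d ≤ (s.card : ℝ≥0∞) ^ d * ∑ i ∈ s, f i ^ d := by
  obtain ⟨i₀, hi₀, hmax⟩ := s.exists_max_image f hs
  calc (∑ i ∈ s, f i) ^ d ≤ (s.card * f i₀) ^ d := by
        gcongr
        simpa using Finset.sum_le_card_nsmul s f (f i₀) hmax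
    _ = (s.card : ℝ≥0∞) ^ d * f i₀ ^ d := mul_pow _ _ _
    _ ≤ (s.card : ℝ≥0∞) ^ d * ∑ i ∈ s, f i ^ d := by
        gcongr
        exact Finset.single_le_sum (f := fun i => f i ^ d) (fun _ _ => zero_le) hi₀

theorem ENNReal.ofReal_sum_le {ι : Type*} (s : Finset ι) (f : ι → ℝ) :
    ENNReal.ofReal (∑ i ∈ s, f i) ≤ ∑ i ∈ s, ENNReal.ofReal (f i) :=
  Finset.le_sum_of_subadditive _ ENNReal.ofReal_zero.le (fun _ _ => ENNReal.ofReal_add_le) s f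

theorem lintegral_eq_tsum_setLIntegral_fiber {α β : Type*} [MeasurableSpace α] [Countable β]
    {ν : Measure α} {g : α → β} (hg : ∀ b, MeasurableSet (g ⁻¹' {b})) (f : α → ℝ≥0∞) :
    ∫⁻ a, f a ∂ν = ∑' b, ∫⁻ a in g ⁻¹' {b}, f a ∂ν := by
  have hcover : ⋃ b, g ⁻¹' {b} = Set.univ := Set.iUnion_eq_univ_iff.2 fun a => ⟨g a, rfl⟩
  rw [← lintegral_iUnion hg (pairwise_disjoint_fiber g), hcover, Measure.restrict_univ]

@[simp]
theorem consStep_zero {X : Type*} (q : X × ℝ) (ω : ℕ → X × ℝ) : consStep q ω 0 = q := rfl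

@[simp]
theorem consStep_succ {X : Type*} (q : X × ℝ) (ω : ℕ → X × ℝ) (n : ℕ) :
    consStep q ω (n + 1) = ω n := rfl

theorem measurable_consStep_s10 {X : Type*} [MeasurableSpace X] :
    Measurable (fun p : (X × ℝ) × (ℕ → X × ℝ) => consStep p.1 p.2) := by
  refine measurable_pi_lambda _ fun n => ?_
  cases n with
  | zero => exact measurable_fst
  | succ n => exact (measurable_pi_apply n).comp measurable_snd

/-- The event `J₁ = ⋯ = Jₙ = k`. -/
def stayAt {X : Type*} (k : X) (n : ℕ) : Set (ℕ → X × ℝ) := {ω | ∀ r < n, (ω r).1 = k}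

theorem consStep_mem_stayAt_succ {X : Type*} {k : X} {q : X × ℝ} {ω : ℕ → X × ℝ} {n : ℕ} :
    consStep q ω ∈ stayAt k (n + 1) ↔ q.1 = k ∧ ω ∈ stayAt k n :=
  ⟨fun h => ⟨h 0 n.succ_pos, fun r hr => h (r + 1) (by omega)⟩,
    fun ⟨hq, hω⟩ r hr => by cases r with
      | zero => exact hq
      | succ r => exact hω r (by omega)⟩

section Measurability

variable {X : Type*} [MeasurableSpace X] [MeasurableSingletonClass X]

theorem measurableSet_fst_eq (k : X) : MeasurableSet {q : X × ℝ | q.1 = k} :=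
  measurable_fst (measurableSet_singleton k)

theorem measurableSet_stayAt (k : X) (n : ℕ) : MeasurableSet (stayAt k n) := by
  simp only [stayAt, Set.ofPred_forall]
  exact .iInter fun r => .iInter fun _ =>
    (measurable_pi_apply r).fst (measurableSet_singleton k)

end Measurability

section VisitTimes

variable {X : Type*} {k : X} {ω : ℕ → X × ℝ}

theorem renV_one_eq_zero_iff : renV k ω 1 = 0 ↔ ∀ s, (ω s).1 = k := by
  change sInf {r | 0 < r ∧ (ω (r - 1)).1 ≠ k} = 0 ↔ _
  constructor
  · intro h s
    by_contra hs
    have hmem := Nat.sInf_mem (s := {r | 0 < r ∧ (ω (r - 1)).1 ≠ k}) ⟨s + 1, s.succ_pos, hs⟩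
    exact (h ▸ hmem).1.false
  · intro h
    convert Nat.sInf_empty
    exact Set.eq_empty_of_forall_notMem fun r hr => hr.2 (h _)

theorem renV_one_eq_succ_iff {n : ℕ} :
    renV k ω 1 = n + 1 ↔ ω ∈ stayAt k n ∧ (ω n).1 ≠ k := by
  change sInf {r | 0 < r ∧ (ω (r - 1)).1 ≠ k} = n + 1 ↔ _
  constructor
  · intro h
    have hne : {r | 0 < r ∧ (ω (r - 1)).1 ≠ k}.Nonempty :=
      Set.nonempty_iff_ne_empty.2 fun he => by simp [he] at h
    refine ⟨fun r hr => ?_, by simpa [h] using (Nat.sInf_mem hne).2⟩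
    by_contra hrk
    exact Nat.notMem_of_lt_sInf (s := {r | 0 < r ∧ (ω (r - 1)).1 ≠ k}) (m := r + 1) (by omega)
      ⟨r.succ_pos, by simpa using hrk⟩
  · rintro ⟨hstay, hn⟩
    refine IsLeast.csInf_eq ⟨⟨n.succ_pos, by simpa using hn⟩, fun r ⟨hr, hrk⟩ => ?_⟩
    by_contra! hrn
    exact hrk (hstay (r - 1) (by omega))

theorem measurableSet_renV_one_eq [MeasurableSpace X] [MeasurableSingletonClass X] (k : X)
    (n : ℕ) : MeasurableSet {ω : ℕ → X × ℝ | renV k ω 1 = n} := by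
  cases n with
  | zero =>
    simp only [renV_one_eq_zero_iff, Set.ofPred_forall]
    exact .iInter fun s => (measurable_pi_apply s).fst (measurableSet_singleton k)
  | succ n =>
    simp only [renV_one_eq_succ_iff, Set.ofPred_and]
    exact (measurableSet_stayAt k n).inter
      ((measurable_pi_apply n).fst (measurableSet_singleton k)).compl

def IsVisitTime (k : X) (ω : ℕ → X × ℝ) (r : ℕ) : Prop := 0 < r ∧ (ω (r - 1)).1 ≠ k

theorem renV_succ_eq_nth {n : ℕ} (h : IsVisitTime k ω (Nat.nth (IsVisitTime k ω) n)) :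
    renV k ω (n + 1) = Nat.nth (IsVisitTime k ω) n := by
  classical
  induction n with
  | zero => rw [Nat.nth_zero]; rfl
  | succ n ih =>
    have hn := Nat.nth_mem_anti n.le_succ h
    have hcard := Nat.lt_card_toFinset_of_nth_ne_zero hn.1.ne'
    change sInf {r | renV k ω (n + 1) < r ∧ (ω (r - 1)).1 ≠ k} = _
    rw [ih hn, ← Nat.count_nth_succ hcard, Nat.nth_count_eq_sInf]
    congr 1
    ext r
    simp only [IsVisitTime, Set.mem_ofPred_eq]
    exact ⟨fun ⟨hr, hrk⟩ => ⟨⟨by omega, hrk⟩, hr⟩, fun ⟨⟨_, hrk⟩, hr⟩ => ⟨hr, hrk⟩⟩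

theorem exists_redChain_eq {N : ℕ} (hN : 0 < N) (hk : (ω (N - 1)).1 ≠ k) :
    ∃ c, redChain k ω (c + 1) = (ω (N - 1)).1 := by
  classical
  have hvisit : IsVisitTime k ω N := ⟨hN, hk⟩
  have hnth := Nat.nth_count hvisit
  refine ⟨Nat.count (IsVisitTime k ω) N, ?_⟩
  rw [redChain, renV_succ_eq_nth (by rwa [hnth]), hnth]

theorem redSojournSeq_one :
    redSojournSeq k ω 1 = ∑ s ∈ Finset.range (renV k ω 1), (ω s).2 := by
  rw [Finset.range_eq_Ico]
  rfl

theorem exists_measure_redChain_pos [MeasurableSpace X] {ν : Measure (ℕ → X × ℝ)} {j : X}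
    (hj : j ≠ k) {n : ℕ} (hn : 1 ≤ n) (hpos : 0 < ν {ω | (ω (n - 1)).1 = j}) :
    ∃ c, 1 ≤ c ∧ 0 < ν {ω | redChain k ω c = j} := by
  by_contra! hnull
  have hcover : {ω | (ω (n - 1)).1 = j} ⊆ ⋃ c, {ω | redChain k ω (c + 1) = j} := fun ω hω => by
    obtain ⟨c, hc⟩ := exists_redChain_eq hn (hω.symm ▸ hj)
    exact Set.mem_iUnion.2 ⟨c, hc.trans hω⟩
  exact hpos.ne' (measure_mono_null hcover
    (measure_iUnion_null fun c => nonpos_iff_eq_zero.1 (hnull (c + 1) (by omega))))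

theorem measure_redSojournSeq_one_nonpos [MeasurableSpace X] {ν : Measure (ℕ → X × ℝ)}
    (hT : ν {ω | renV k ω 1 = 0} = 0) (hX : ∀ s, ν {ω | (ω s).2 ≤ 0} = 0) :
    ν {ω | redSojournSeq k ω 1 ≤ 0} = 0 := by
  refine measure_mono_null (fun ω hω => ?_) (measure_union_null hT (measure_iUnion_null hX))
  by_contra! hpos
  simp only [Set.mem_union, Set.mem_iUnion, Set.mem_ofPred_eq, not_or, not_exists, not_le] at hpos
  rw [Set.mem_ofPred_eq, redSojournSeq_one] at hω
  exact hω.not_gt (Finset.sum_pos (fun s _ => hpos.2 s) (Finset.nonempty_range_iff.2 hpos.1))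

end VisitTimes

/-- `μ x` is the law of the path `ω n = (J_{n+1}, X_{n+1})` of the Markov renewal process with
semi-Markov kernel `Q` started at `J₀ = x`. -/
def IsMarkovRenewalLaw {X : Type*} [MeasurableSpace X] (Q : X → Measure (X × ℝ))
    (μ : X → Measure (ℕ → X × ℝ)) : Prop :=
  ∀ i A, MeasurableSet A → μ i A = ∫⁻ q, μ q.1 {ω | consStep q ω ∈ A} ∂Q i

namespace IsMarkovRenewalLaw

variable {X : Type*} [MeasurableSpace X] {Q : X → Measure (X × ℝ)} {μ : X → Measure (ℕ → X × ℝ)}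

theorem measure_sojourn_nonpos (hμ : IsMarkovRenewalLaw Q μ) (hB : ∀ x, Q x {q | q.2 ≤ 0} = 0)
    (s : ℕ) (i : X) : μ i {ω | (ω s).2 ≤ 0} = 0 := by
  have hms : ∀ s, MeasurableSet {ω : ℕ → X × ℝ | (ω s).2 ≤ 0} := fun s =>
    measurableSet_le (measurable_pi_apply s).snd measurable_const
  induction s generalizing i with
  | zero =>
    rw [hμ i _ (hms 0)]
    refine (lintegral_congr_ae ?_).trans lintegral_zero
    filter_upwards [measure_eq_zero_iff_ae_notMem.1 (hB i)] with q hq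
    simp [hq]
  | succ s ih => simp [hμ i _ (hms (s + 1)), ih]

variable [DiscreteMeasurableSpace X]

theorem lintegral_eq_lintegral_consStep (hμ : IsMarkovRenewalLaw Q μ)
    [∀ x, IsProbabilityMeasure (μ x)] (i : X) [SFinite (Q i)] {g : (ℕ → X × ℝ) → ℝ≥0∞}
    (hg : Measurable g) :
    ∫⁻ ω, g ω ∂μ i = ∫⁻ q, ∫⁻ ω, g (consStep q ω) ∂μ q.1 ∂Q i := by
  let κ : Kernel (X × ℝ) (ℕ → X × ℝ) :=
    ⟨fun q => μ q.1, Measurable.of_discrete.comp measurable_fst⟩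
  have : IsMarkovKernel κ := ⟨fun q => inferInstanceAs (IsProbabilityMeasure (μ q.1))⟩
  have hmap : μ i = (Q i ⊗ₘ κ).map (fun p => consStep p.1 p.2) := by
    ext A hA
    rw [Measure.map_apply measurable_consStep_s10 hA, Measure.compProd_apply (measurable_consStep_s10 hA),
      hμ i A hA]
    rfl
  rw [hmap, lintegral_map hg measurable_consStep_s10]
  exact Measure.lintegral_compProd (hg.comp measurable_consStep_s10)

theorem setLIntegral_stayAt_succ (hμ : IsMarkovRenewalLaw Q μ)
    [∀ x, IsProbabilityMeasure (μ x)] (i : X) [SFinite (Q i)] (k : X) (n : ℕ)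
    {g : (ℕ → X × ℝ) → ℝ≥0∞} (hg : Measurable g) :
    ∫⁻ ω in stayAt k (n + 1), g ω ∂μ i =
      ∫⁻ q in {q | q.1 = k}, ∫⁻ ω in stayAt k n, g (consStep q ω) ∂μ k ∂Q i := by
  rw [← lintegral_indicator (measurableSet_stayAt k (n + 1)),
    hμ.lintegral_eq_lintegral_consStep i (hg.indicator (measurableSet_stayAt k (n + 1))),
    ← lintegral_indicator (measurableSet_fst_eq k)]
  refine lintegral_congr fun q => ?_
  by_cases hq : q.1 = k
  · rw [Set.indicator_of_mem (show q ∈ {q : X × ℝ | q.1 = k} from hq), hq,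
      ← lintegral_indicator (measurableSet_stayAt k n)]
    congr with ω
    by_cases hω : ω ∈ stayAt k n
    · rw [Set.indicator_of_mem hω, Set.indicator_of_mem (consStep_mem_stayAt_succ.2 ⟨hq, hω⟩)]
    · rw [Set.indicator_of_notMem hω,
        Set.indicator_of_notMem fun h => hω (consStep_mem_stayAt_succ.1 h).2]
  · simp [consStep_mem_stayAt_succ, hq]

theorem lintegral_comp_apply_zero (hμ : IsMarkovRenewalLaw Q μ) [∀ x, IsProbabilityMeasure (μ x)]
    (i : X) [SFinite (Q i)] {f : X × ℝ → ℝ≥0∞} (hf : Measurable f) :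
    ∫⁻ ω, f (ω 0) ∂μ i = ∫⁻ q, f q ∂Q i := by
  rw [hμ.lintegral_eq_lintegral_consStep i (g := fun ω => f (ω 0))
    (hf.comp (measurable_pi_apply 0))]
  simp

theorem measure_stayAt_succ (hμ : IsMarkovRenewalLaw Q μ) [∀ x, IsProbabilityMeasure (μ x)]
    (i : X) [SFinite (Q i)] (k : X) (n : ℕ) :
    μ i (stayAt k (n + 1)) = Q i {q | q.1 = k} * μ k (stayAt k n) := by
  have := hμ.setLIntegral_stayAt_succ i k n (g := fun _ => 1) measurable_const
  simp only [setLIntegral_const, one_mul] at this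
  rw [this, mul_comm]

theorem measure_stayAt_self (hμ : IsMarkovRenewalLaw Q μ) [∀ x, IsProbabilityMeasure (μ x)]
    (k : X) [SFinite (Q k)] (n : ℕ) : μ k (stayAt k n) = Q k {q | q.1 = k} ^ n := by
  induction n with
  | zero => simp [stayAt]
  | succ n ih => rw [hμ.measure_stayAt_succ, ih, pow_succ']

theorem measure_stayAt_succ_le (hμ : IsMarkovRenewalLaw Q μ) [∀ x, IsProbabilityMeasure (μ x)]
    (i : X) [IsProbabilityMeasure (Q i)] (k : X) [SFinite (Q k)] (n : ℕ) :
    μ i (stayAt k (n + 1)) ≤ Q k {q | q.1 = k} ^ n := by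
  rw [hμ.measure_stayAt_succ, hμ.measure_stayAt_self]
  exact mul_le_of_le_one_left' prob_le_one

theorem setLIntegral_stayAt_succ_comp_apply_zero (hμ : IsMarkovRenewalLaw Q μ)
    [∀ x, IsProbabilityMeasure (μ x)] (i : X) [SFinite (Q i)] (k : X) (n : ℕ)
    {f : X × ℝ → ℝ≥0∞} (hf : Measurable f) :
    ∫⁻ ω in stayAt k (n + 1), f (ω 0) ∂μ i =
      (∫⁻ q in {q | q.1 = k}, f q ∂Q i) * μ k (stayAt k n) := by
  rw [hμ.setLIntegral_stayAt_succ i k n (g := fun ω => f (ω 0)) (hf.comp (measurable_pi_apply 0)),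
    ← lintegral_mul_const _ hf]
  simp only [consStep_zero, setLIntegral_const]

theorem setLIntegral_stayAt_succ_comp_apply_succ (hμ : IsMarkovRenewalLaw Q μ)
    [∀ x, IsProbabilityMeasure (μ x)] (i : X) [SFinite (Q i)] (k : X) (n s : ℕ)
    {f : X × ℝ → ℝ≥0∞} (hf : Measurable f) :
    ∫⁻ ω in stayAt k (n + 1), f (ω (s + 1)) ∂μ i =
      Q i {q | q.1 = k} * ∫⁻ ω in stayAt k n, f (ω s) ∂μ k := by
  rw [hμ.setLIntegral_stayAt_succ i k n (g := fun ω => f (ω (s + 1)))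
      (hf.comp (measurable_pi_apply (s + 1)))]
  simp only [consStep_succ, setLIntegral_const, mul_comm]

theorem setLIntegral_stayAt_self_le (hμ : IsMarkovRenewalLaw Q μ)
    [∀ x, IsProbabilityMeasure (μ x)] (k : X) [IsProbabilityMeasure (Q k)]
    {f : X × ℝ → ℝ≥0∞} (hf : Measurable f) {C : ℝ≥0∞} (hC : ∫⁻ q, f q ∂Q k ≤ C)
    {s n : ℕ} (hsn : s ≤ n) :
    ∫⁻ ω in stayAt k n, f (ω s) ∂μ k ≤ C * Q k {q | q.1 = k} ^ (n - 1) := by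
  set p := Q k {q | q.1 = k}
  induction s generalizing n with
  | zero =>
    cases n with
    | zero => simpa [stayAt, hμ.lintegral_comp_apply_zero k hf] using hC
    | succ n =>
      rw [hμ.setLIntegral_stayAt_succ_comp_apply_zero k k n hf, hμ.measure_stayAt_self,
        Nat.add_sub_cancel]
      exact mul_le_mul_left ((setLIntegral_le_lintegral _ _).trans hC) _
  | succ s ih =>
    obtain _ | n := n
    · omega
    rw [hμ.setLIntegral_stayAt_succ_comp_apply_succ k k n s hf, Nat.add_sub_cancel]
    calc p * ∫⁻ ω in stayAt k n, f (ω s) ∂μ k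
        ≤ p * (C * p ^ (n - 1)) := by gcongr; exact ih (by omega)
      _ = C * (p * p ^ (n - 1)) := by ring
      _ ≤ C * p ^ n := by
        gcongr
        rcases n.eq_zero_or_pos with rfl | hn
        · simpa using prob_le_one
        · rw [mul_pow_sub_one hn.ne']

/-- Of the `n` steps into `k`, the first one (from `i`) and the one carrying `(ω s).2` are not
bounded by `p`. -/
theorem setLIntegral_stayAt_le (hμ : IsMarkovRenewalLaw Q μ)
    [∀ x, IsProbabilityMeasure (μ x)] [∀ x, IsProbabilityMeasure (Q x)] (i k : X)
    {f : X × ℝ → ℝ≥0∞} (hf : Measurable f) {C : ℝ≥0∞} (hC : ∀ x, ∫⁻ q, f q ∂Q x ≤ C)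
    {s n : ℕ} (hsn : s ≤ n) :
    ∫⁻ ω in stayAt k n, f (ω s) ∂μ i ≤ C * Q k {q | q.1 = k} ^ (n - 2) := by
  obtain _ | n := n
  · obtain rfl : s = 0 := by omega
    simpa [stayAt, hμ.lintegral_comp_apply_zero i hf] using hC i
  obtain _ | s := s
  · rw [hμ.setLIntegral_stayAt_succ_comp_apply_zero i k n hf, hμ.measure_stayAt_self]
    exact mul_le_mul' ((setLIntegral_le_lintegral _ _).trans (hC i))
      (pow_le_pow_of_le_one zero_le prob_le_one (by omega))
  · rw [hμ.setLIntegral_stayAt_succ_comp_apply_succ i k n s hf]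
    exact (mul_le_mul' prob_le_one (hμ.setLIntegral_stayAt_self_le k hf (hC k) (by omega))).trans
      (by simp)

theorem selfTransition_lt_one (hμ : IsMarkovRenewalLaw Q μ) [∀ x, IsProbabilityMeasure (μ x)]
    {k l : X} [SFinite (Q k)] (hlk : l ≠ k) {n : ℕ} (hreach : 0 < μ k {ω | (ω n).1 = l}) :
    Q k {q | q.1 = k} < 1 := by
  by_contra! hp
  have hstay : μ k (stayAt k (n + 1)) = 1 :=
    le_antisymm prob_le_one (hμ.measure_stayAt_self k (n + 1) ▸ one_le_pow₀ hp)
  have hleave : {ω | (ω n).1 = l} ⊆ (stayAt k (n + 1))ᶜ := fun ω hω hstay =>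
    hlk (hω.symm.trans (hstay n n.lt_succ_self))
  exact hreach.ne' (measure_mono_null hleave
    ((prob_compl_eq_zero_iff (measurableSet_stayAt k (n + 1))).2 hstay))

theorem measure_renV_one_eq_zero (hμ : IsMarkovRenewalLaw Q μ) [∀ x, IsProbabilityMeasure (μ x)]
    (i : X) [IsProbabilityMeasure (Q i)] (k : X) [SFinite (Q k)]
    (hp : Q k {q | q.1 = k} < 1) : μ i {ω | renV k ω 1 = 0} = 0 := by
  refine le_antisymm (ge_of_tendsto' (ENNReal.tendsto_pow_atTop_nhds_zero_of_lt_one hp)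
    fun n => ?_) zero_le
  have hstay : {ω | renV k ω 1 = 0} ⊆ stayAt k (n + 1) := fun ω hω r _ =>
    renV_one_eq_zero_iff.1 hω r
  exact (measure_mono hstay).trans (hμ.measure_stayAt_succ_le i k n)

theorem setLIntegral_redSojournSeq_pow_le (hμ : IsMarkovRenewalLaw Q μ)
    [∀ x, IsProbabilityMeasure (μ x)] [∀ x, IsProbabilityMeasure (Q x)] (i k : X) (d n : ℕ)
    {C : ℝ≥0∞} (hC : ∀ x, ∫⁻ q, ENNReal.ofReal q.2 ^ d ∂Q x ≤ C) :
    ∫⁻ ω in {ω | renV k ω 1 = n + 1}, ENNReal.ofReal (redSojournSeq k ω 1) ^ d ∂μ i ≤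
      C * ((n + 1 : ℕ) : ℝ≥0∞) ^ (d + 1) * Q k {q | q.1 = k} ^ (n + 1 - 3) := by
  have hf : Measurable fun q : X × ℝ => ENNReal.ofReal q.2 ^ d :=
    measurable_snd.ennreal_ofReal.pow_const d
  have hfs : ∀ s, Measurable fun ω : ℕ → X × ℝ => ENNReal.ofReal (ω s).2 ^ d :=
    fun s => hf.comp (measurable_pi_apply s)
  calc ∫⁻ ω in {ω | renV k ω 1 = n + 1}, ENNReal.ofReal (redSojournSeq k ω 1) ^ d ∂μ i
      ≤ ∫⁻ ω in {ω | renV k ω 1 = n + 1}, ((n + 1 : ℕ) : ℝ≥0∞) ^ d *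
          ∑ s ∈ Finset.range (n + 1), ENNReal.ofReal (ω s).2 ^ d ∂μ i := by
        refine setLIntegral_mono' (measurableSet_renV_one_eq k (n + 1)) fun ω hω => ?_
        rw [redSojournSeq_one, hω]
        simpa using (pow_le_pow_left₀ zero_le (ENNReal.ofReal_sum_le _ _) d).trans
          (ENNReal.sum_pow_le_card_pow_mul_sum_pow Finset.nonempty_range_add_one _ d)
    _ ≤ ∫⁻ ω in stayAt k n, ((n + 1 : ℕ) : ℝ≥0∞) ^ d *
          ∑ s ∈ Finset.range (n + 1), ENNReal.ofReal (ω s).2 ^ d ∂μ i :=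
        lintegral_mono_set fun ω hω => (renV_one_eq_succ_iff.1 hω).1
    _ = ((n + 1 : ℕ) : ℝ≥0∞) ^ d *
          ∑ s ∈ Finset.range (n + 1), ∫⁻ ω in stayAt k n, ENNReal.ofReal (ω s).2 ^ d ∂μ i := by
        rw [lintegral_const_mul _ (Finset.measurable_sum _ fun s _ => hfs s),
          lintegral_finsetSum _ fun s _ => hfs s]
    _ ≤ ((n + 1 : ℕ) : ℝ≥0∞) ^ d *
          ∑ s ∈ Finset.range (n + 1), C * Q k {q | q.1 = k} ^ (n - 2) := by
        gcongr with s hs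
        exact hμ.setLIntegral_stayAt_le i k hf hC (Finset.mem_range_succ_iff.1 hs)
    _ = C * ((n + 1 : ℕ) : ℝ≥0∞) ^ (d + 1) * Q k {q | q.1 = k} ^ (n + 1 - 3) := by
        rw [Finset.sum_const, Finset.card_range, nsmul_eq_mul, show n + 1 - 3 = n - 2 by omega]
        ring

theorem lintegral_redSojournSeq_pow_ne_top (hμ : IsMarkovRenewalLaw Q μ)
    [∀ x, IsProbabilityMeasure (μ x)] [∀ x, IsProbabilityMeasure (Q x)] (i k : X) (d : ℕ)
    {C : ℝ≥0∞} (hC : ∀ x, ∫⁻ q, ENNReal.ofReal q.2 ^ d ∂Q x ≤ C) (hC_ne_top : C ≠ ⊤)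
    (hp : Q k {q | q.1 = k} < 1) :
    ∫⁻ ω, ENNReal.ofReal (redSojournSeq k ω 1) ^ d ∂μ i ≠ ⊤ := by
  have hpartition : ∫⁻ ω, ENNReal.ofReal (redSojournSeq k ω 1) ^ d ∂μ i =
      ∑' n, ∫⁻ ω in {ω | renV k ω 1 = n}, ENNReal.ofReal (redSojournSeq k ω 1) ^ d ∂μ i :=
    lintegral_eq_tsum_setLIntegral_fiber (measurableSet_renV_one_eq k) _
  have hterm : ∀ n, ∫⁻ ω in {ω | renV k ω 1 = n}, ENNReal.ofReal (redSojournSeq k ω 1) ^ d ∂μ i ≤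
      C * ((n : ℝ≥0∞) ^ (d + 1) * Q k {q | q.1 = k} ^ (n - 3)) := by
    rintro (_ | n)
    · rw [setLIntegral_measure_zero _ _ (hμ.measure_renV_one_eq_zero i k hp)]
      exact zero_le
    · rw [← mul_assoc]
      exact hμ.setLIntegral_redSojournSeq_pow_le i k d n hC
  rw [hpartition]
  refine ne_top_of_le_ne_top ?_ (ENNReal.tsum_le_tsum hterm)
  rw [ENNReal.tsum_mul_left]
  exact ENNReal.mul_ne_top hC_ne_top (ENNReal.tsum_natCast_pow_mul_pow_sub_ne_top hp _ _)

end IsMarkovRenewalLaw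

/-- If the Markov renewal process `(J_n, X_n)` satisfies
(A) the state space is a communicating class, (B) no instantaneous transitions,
and (C_d) finite `d`-th sojourn moments, then for every `k ≠ 0` the reduced Markov
renewal process `(ₖJ_n, ₖX_n)` on `X \ {k}` also satisfies (A), (B) and (C_d). -/
theorem reduced_process_preserves_conditions {m : ℕ} (d : ℕ)
    (Q : Fin (m + 1) → Measure (Fin (m + 1) × ℝ))
    (hQ : ∀ i, IsProbabilityMeasure (Q i))
    (μ : Fin (m + 1) → Measure (ℕ → Fin (m + 1) × ℝ))
    (hprob : ∀ i, IsProbabilityMeasure (μ i))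
    (hMRP : ∀ (i : Fin (m + 1)) (A : Set (ℕ → Fin (m + 1) × ℝ)), MeasurableSet A →
      μ i A = ∫⁻ q, μ q.1 {ω | consStep q ω ∈ A} ∂ Q i)
    -- (A): the state space is a communicating class for the embedded chain
    (hA : ∀ i j : Fin (m + 1), ∃ n, 1 ≤ n ∧ 0 < μ i {ω | (ω (n - 1)).1 = j})
    -- (B): no instantaneous transitions
    (hB : ∀ i, Q i {q | q.2 ≤ 0} = 0)
    -- (C_d): finite `d`-th moments of sojourn times
    (hC : ∀ i j, ∫⁻ q in {q | q.1 = j}, (ENNReal.ofReal q.2) ^ d ∂ Q i ≠ ⊤)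
    (k : Fin (m + 1)) (hk : k ≠ 0) :
    -- (A) for the reduced process
    (∀ i j : Fin (m + 1), i ≠ k → j ≠ k →
      ∃ n, 1 ≤ n ∧ 0 < μ i {ω | redChain k ω n = j}) ∧
    -- (B) for the reduced process
    (∀ i : Fin (m + 1), i ≠ k → μ i {ω | redSojournSeq k ω 1 ≤ 0} = 0) ∧
    -- (C_d) for the reduced process
    (∀ i j : Fin (m + 1), i ≠ k → j ≠ k →
      ∫⁻ ω in {ω | redChain k ω 1 = j},
        (ENNReal.ofReal (redSojournSeq k ω 1)) ^ d ∂ μ i ≠ ⊤) := by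
  have hμ : IsMarkovRenewalLaw Q μ := hMRP
  have hp : Q k {q | q.1 = k} < 1 := by
    obtain ⟨n, -, hreach⟩ := hA k 0
    exact hμ.selfTransition_lt_one hk.symm hreach
  refine ⟨fun i j _ hj => ?_, fun i _ => ?_, fun i j _ _ => ?_⟩
  · obtain ⟨n, hn, hpos⟩ := hA i j
    exact exists_measure_redChain_pos hj hn hpos
  · exact measure_redSojournSeq_one_nonpos (hμ.measure_renV_one_eq_zero i k hp)
      fun s => hμ.measure_sojourn_nonpos hB s i
  · have hmoment : ∀ x, ∫⁻ q, ENNReal.ofReal q.2 ^ d ∂Q x ≠ ⊤ := fun x => by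
      rw [lintegral_eq_tsum_setLIntegral_fiber (measurableSet_fst_eq ·), tsum_fintype]
      exact ENNReal.sum_ne_top.2 fun j _ => hC x j
    refine ne_top_of_le_ne_top ?_ (setLIntegral_le_lintegral _ _)
    exact hμ.lintegral_redSojournSeq_pow_ne_top i k d
      (fun x => Finset.single_le_sum (f := fun x => ∫⁻ q, ENNReal.ofReal q.2 ^ d ∂Q x)
        (fun _ _ => zero_le) (Finset.mem_univ x))
      (ENNReal.sum_ne_top.2 fun x _ => hmoment x) hp
end
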